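/- arXiv:1608.03725 — 2 statements merged into one kernel-verified Lean document; each statement's English description precedes it below -/
import Mathlib

section
/- Let < be a monomial preorder and I an ideal of k[X]_< such that the leading ideal L_<(I) is a prime ideal of k[X]. Then I is a prime ideal of k[X]_<. -/
open MvPolynomial

structure MonomialPreorder (n : ℕ) where
  lt : (Fin n →₀ ℕ) → (Fin n →₀ ℕ) → Prop
  irrefl : ∀ a, ¬ lt a a
  trans : ∀ {a b c}, lt a b → lt b c → lt a c
  weak : ∀ {a b c}, (¬ lt a b ∧ ¬ lt b a) → (¬ lt b c ∧ ¬ lt c b) → ¬ lt a c ∧ ¬ lt c a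
  compat : ∀ {a b} (c), lt a b → lt (a + c) (b + c)
  cancel : ∀ {a b} (c), lt (a + c) (b + c) → lt a b

variable {n : ℕ} {k : Type*} [Field k]

open Classical in
noncomputable def leadingPart (P : MonomialPreorder n) (f : MvPolynomial (Fin n) k) :
    MvPolynomial (Fin n) k :=
  ∑ a ∈ f.support.filter (fun a => ∀ b ∈ f.support, ¬ P.lt a b),
    monomial a (coeff a f)

noncomputable def Sles (k : Type*) [Field k] (P : MonomialPreorder n) : Submonoid (MvPolynomial (Fin n) k) :=
  Submonoid.closure {u | leadingPart P u = 1}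

abbrev Loc (k : Type*) [Field k] (P : MonomialPreorder n) := Localization (Sles k P)

noncomputable def leadingIdealWrt (P Q : MonomialPreorder n) (G : Set (Loc k P)) :
    Ideal (MvPolynomial (Fin n) k) :=
  Ideal.span {q | ∃ f ∈ G, ∃ u p : MvPolynomial (Fin n) k, leadingPart P u = 1 ∧
    algebraMap (MvPolynomial (Fin n) k) (Loc k P) p = algebraMap (MvPolynomial (Fin n) k) (Loc k P) u * f ∧
    q = leadingPart Q p}

noncomputable def leadingIdeal (P : MonomialPreorder n) (G : Set (Loc k P)) :
    Ideal (MvPolynomial (Fin n) k) := leadingIdealWrt P P G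

noncomputable def leadingIdealPoly (P : MonomialPreorder n) (Q : Set (MvPolynomial (Fin n) k)) :
    Ideal (MvPolynomial (Fin n) k) :=
  Ideal.span (leadingPart P '' Q)

namespace Mora

open scoped Classical

variable (P : MonomialPreorder n)

/-! ### Part 0 : the incomparability relation -/

def eqv (a b : Fin n →₀ ℕ) : Prop := ¬ P.lt a b ∧ ¬ P.lt b a

lemma eqv_refl (a : Fin n →₀ ℕ) : eqv P a a := ⟨P.irrefl a, P.irrefl a⟩

lemma eqv_symm {a b : Fin n →₀ ℕ} (h : eqv P a b) : eqv P b a := ⟨h.2, h.1⟩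

lemma eqv_trans {a b c : Fin n →₀ ℕ} (h1 : eqv P a b) (h2 : eqv P b c) : eqv P a c :=
  P.weak h1 h2

lemma lt_of_lt_of_eqv {a b c : Fin n →₀ ℕ} (h : P.lt a b) (h2 : eqv P b c) : P.lt a c := by
  by_contra hac
  rcases Classical.em (P.lt c a) with hca | hca
  · exact h2.2 (P.trans hca h)
  · exact (eqv_trans P ⟨hac, hca⟩ (eqv_symm P h2)).1 h

lemma lt_of_eqv_of_lt {a b c : Fin n →₀ ℕ} (h1 : eqv P a b) (h : P.lt b c) : P.lt a c := by
  by_contra hac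
  rcases Classical.em (P.lt c a) with hca | hca
  · exact h1.2 (P.trans h hca)
  · exact (eqv_trans P (eqv_symm P h1) ⟨hac, hca⟩).1 h

lemma eqv_add_right {a b : Fin n →₀ ℕ} (c : Fin n →₀ ℕ) (h : eqv P a b) :
    eqv P (a + c) (b + c) :=
  ⟨fun hl => h.1 (P.cancel c hl), fun hl => h.2 (P.cancel c hl)⟩

lemma eqv_cancel_right {a b c : Fin n →₀ ℕ} (h : eqv P (a + c) (b + c)) : eqv P a b :=
  ⟨fun hl => h.1 (P.compat c hl), fun hl => h.2 (P.compat c hl)⟩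

lemma eqv_add {a b c d : Fin n →₀ ℕ} (h1 : eqv P a b) (h2 : eqv P c d) :
    eqv P (a + c) (b + d) := by
  refine eqv_trans P (eqv_add_right P c h1) ?_
  rw [add_comm b c, add_comm b d]
  exact eqv_add_right P b h2

lemma lt_add {a b c d : Fin n →₀ ℕ} (h1 : P.lt a b) (h2 : eqv P c d) :
    P.lt (a + c) (b + d) := by
  refine lt_of_lt_of_eqv P (P.compat c h1) ?_
  rw [add_comm b c, add_comm b d]
  exact eqv_add_right P b h2

lemma lt_add_lt {a b c d : Fin n →₀ ℕ} (h1 : P.lt a b) (h2 : P.lt c d) :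
    P.lt (a + c) (b + d) := by
  refine P.trans (P.compat c h1) ?_
  rw [add_comm b c, add_comm b d]
  exact P.compat b h2

/-! ### Part 1 : the refinement to a total order -/

def lts (a b : Fin n →₀ ℕ) : Prop := P.lt a b ∨ (eqv P a b ∧ toLex a < toLex b)

lemma lt_lts {a b : Fin n →₀ ℕ} (h : P.lt a b) : lts P a b := Or.inl h

lemma lts_irrefl (a : Fin n →₀ ℕ) : ¬ lts P a a := by
  rintro (h | ⟨-, h⟩)
  · exact P.irrefl a h
  · exact lt_irrefl _ h

lemma lts_trans {a b c : Fin n →₀ ℕ} (h1 : lts P a b) (h2 : lts P b c) : lts P a c := by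
  rcases h1 with h1 | ⟨he1, hl1⟩ <;> rcases h2 with h2 | ⟨he2, hl2⟩
  · exact Or.inl (P.trans h1 h2)
  · exact Or.inl (lt_of_lt_of_eqv P h1 he2)
  · exact Or.inl (lt_of_eqv_of_lt P he1 h2)
  · exact Or.inr ⟨eqv_trans P he1 he2, hl1.trans hl2⟩

lemma lts_asymm {a b : Fin n →₀ ℕ} (h : lts P a b) : ¬ lts P b a := fun h2 =>
  lts_irrefl P a (lts_trans P h h2)

lemma lts_total {a b : Fin n →₀ ℕ} (h : a ≠ b) : lts P a b ∨ lts P b a := by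
  rcases Classical.em (P.lt a b) with h1 | h1
  · exact Or.inl (Or.inl h1)
  rcases Classical.em (P.lt b a) with h2 | h2
  · exact Or.inr (Or.inl h2)
  rcases lt_or_gt_of_ne (fun hh : toLex a = toLex b => h (by exact_mod_cast hh)) with hl | hl
  · exact Or.inl (Or.inr ⟨⟨h1, h2⟩, hl⟩)
  · exact Or.inr (Or.inr ⟨⟨h2, h1⟩, hl⟩)

lemma eq_of_not_lts {a b : Fin n →₀ ℕ} (h1 : ¬ lts P a b) (h2 : ¬ lts P b a) : a = b := by
  by_contra h
  rcases lts_total P h with h' | h'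
  · exact h1 h'
  · exact h2 h'

lemma toLex_add_lt {a b : Fin n →₀ ℕ} (c : Fin n →₀ ℕ) (h : toLex a < toLex b) :
    toLex (a + c) < toLex (b + c) := by
  exact add_lt_add_left h (toLex c)

lemma lts_add_right {a b : Fin n →₀ ℕ} (c : Fin n →₀ ℕ) (h : lts P a b) :
    lts P (a + c) (b + c) := by
  rcases h with h | ⟨he, hl⟩
  · exact Or.inl (P.compat c h)
  · exact Or.inr ⟨eqv_add_right P c he, toLex_add_lt c hl⟩

lemma lts_cancel_right {a b c : Fin n →₀ ℕ} (h : lts P (a + c) (b + c)) : lts P a b := by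
  rcases h with h | ⟨he, hl⟩
  · exact Or.inl (P.cancel c h)
  · refine Or.inr ⟨eqv_cancel_right P he, ?_⟩
    have h' : toLex a + toLex c < toLex b + toLex c := hl
    exact lt_of_add_lt_add_right h'

lemma lts_zero_iff {a : Fin n →₀ ℕ} : lts P a 0 ↔ P.lt a 0 := by
  constructor
  · rintro (h | ⟨-, h⟩)
    · exact h
    · exact absurd (Finsupp.toLex_monotone (zero_le : (0 : Fin n →₀ ℕ) ≤ a)) (not_le.mpr h)
  · exact Or.inl

/-! ### Part 2 : basic properties of `leadingPart` -/

noncomputable def maxSet (f : MvPolynomial (Fin n) k) : Finset (Fin n →₀ ℕ) :=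
  f.support.filter (fun a => ∀ b ∈ f.support, ¬ P.lt a b)

lemma leadingPart_eq_sum (f : MvPolynomial (Fin n) k) :
    leadingPart P f = ∑ a ∈ maxSet P f, monomial a (coeff a f) := by
  rw [leadingPart, maxSet]

lemma maxSet_subset (f : MvPolynomial (Fin n) k) : maxSet P f ⊆ f.support :=
  Finset.filter_subset _ _

lemma mem_maxSet {f : MvPolynomial (Fin n) k} {a : Fin n →₀ ℕ} :
    a ∈ maxSet P f ↔ a ∈ f.support ∧ ∀ b ∈ f.support, ¬ P.lt a b := Finset.mem_filter

lemma coeff_leadingPart (f : MvPolynomial (Fin n) k) (a : Fin n →₀ ℕ) :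
    coeff a (leadingPart P f) = if a ∈ maxSet P f then coeff a f else 0 := by
  rw [leadingPart_eq_sum]
  rw [coeff_sum]
  simp only [coeff_monomial]
  rw [Finset.sum_ite_eq' (maxSet P f) a (fun b => coeff b f)]

lemma support_leadingPart (f : MvPolynomial (Fin n) k) :
    (leadingPart P f).support = maxSet P f := by
  ext a
  rw [mem_support_iff, coeff_leadingPart]
  split_ifs with h
  · simpa [h] using (mem_support_iff.mp (maxSet_subset P f h))
  · simp [h]

lemma eqv_of_mem_maxSet {f : MvPolynomial (Fin n) k} {a b : Fin n →₀ ℕ}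
    (ha : a ∈ maxSet P f) (hb : b ∈ maxSet P f) : eqv P a b := by
  rw [mem_maxSet] at ha hb
  exact ⟨ha.2 b hb.1, hb.2 a ha.1⟩

private lemma exists_max_above_aux (s : Finset (Fin n →₀ ℕ)) (N : ℕ) :
    ∀ b ∈ s, (s.filter (fun x => P.lt b x)).card ≤ N →
      ∃ a ∈ s, (∀ c ∈ s, ¬ P.lt a c) ∧ (b = a ∨ P.lt b a) := by
  induction N with
  | zero =>
    intro b hb hcard
    refine ⟨b, hb, fun c hc hbc => ?_, Or.inl rfl⟩
    have : c ∈ s.filter (fun x => P.lt b x) := Finset.mem_filter.mpr ⟨hc, hbc⟩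
    rw [Finset.card_eq_zero.mp (Nat.le_zero.mp hcard)] at this
    exact absurd this (Finset.notMem_empty c)
  | succ N ih =>
    intro b hb hcard
    by_cases hmax : ∀ c ∈ s, ¬ P.lt b c
    · exact ⟨b, hb, hmax, Or.inl rfl⟩
    push_neg at hmax
    obtain ⟨c, hc, hbc⟩ := hmax
    have hsub : s.filter (fun x => P.lt c x) ⊂ s.filter (fun x => P.lt b x) := by
      refine Finset.ssubset_iff_of_subset (fun x hx => ?_) |>.mpr ?_
      · rw [Finset.mem_filter] at hx ⊢
        exact ⟨hx.1, P.trans hbc hx.2⟩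
      · exact ⟨c, Finset.mem_filter.mpr ⟨hc, hbc⟩, fun h =>
          P.irrefl c (Finset.mem_filter.mp h).2⟩
    have hcard' : (s.filter (fun x => P.lt c x)).card ≤ N := by
      have := Finset.card_lt_card hsub
      omega
    obtain ⟨a, ha, hamax, hca⟩ := ih c hc hcard'
    refine ⟨a, ha, hamax, Or.inr ?_⟩
    rcases hca with rfl | h'
    · exact hbc
    · exact P.trans hbc h'

lemma exists_max_above {f : MvPolynomial (Fin n) k} {b : Fin n →₀ ℕ} (hb : b ∈ f.support) :
    ∃ a ∈ maxSet P f, b = a ∨ P.lt b a := by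
  obtain ⟨a, ha, hamax, hba⟩ := exists_max_above_aux P f.support
    (f.support.filter (fun x => P.lt b x)).card b hb le_rfl
  exact ⟨a, (mem_maxSet P).mpr ⟨ha, hamax⟩, hba⟩

lemma maxSet_nonempty {f : MvPolynomial (Fin n) k} (hf : f ≠ 0) : (maxSet P f).Nonempty := by
  obtain ⟨b, hb⟩ := Finset.nonempty_iff_ne_empty.mpr (fun h => hf (support_eq_empty.mp h))
  obtain ⟨a, ha, -⟩ := exists_max_above P hb
  exact ⟨a, ha⟩

lemma leadingPart_eq_zero_iff {f : MvPolynomial (Fin n) k} :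
    leadingPart P f = 0 ↔ f = 0 := by
  constructor
  · intro h
    by_contra hf
    obtain ⟨a, ha⟩ := maxSet_nonempty P hf
    have : a ∈ (leadingPart P f).support := by rw [support_leadingPart]; exact ha
    rw [h] at this
    simpa using this
  · intro h
    rw [h]
    simp [leadingPart]

lemma dominated {f : MvPolynomial (Fin n) k} {a b : Fin n →₀ ℕ}
    (hb : b ∈ f.support) (ha : a ∈ maxSet P f) : eqv P b a ∨ P.lt b a := by
  obtain ⟨a', ha', hba'⟩ := exists_max_above P hb
  rcases hba' with rfl | h
  · exact Or.inl (eqv_of_mem_maxSet P ha' ha)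
  · exact Or.inr (lt_of_lt_of_eqv P h (eqv_of_mem_maxSet P ha' ha))

lemma leadingPart_of_homog {f : MvPolynomial (Fin n) k}
    (h : ∀ a ∈ f.support, ∀ b ∈ f.support, eqv P a b) : leadingPart P f = f := by
  have hm : maxSet P f = f.support := by
    ext a
    rw [mem_maxSet]
    exact ⟨fun h' => h'.1, fun ha => ⟨ha, fun b hb => (h a ha b hb).1⟩⟩
  rw [leadingPart_eq_sum, hm]
  exact support_sum_monomial_coeff f

lemma leadingPart_homog (f : MvPolynomial (Fin n) k) :
    ∀ a ∈ (leadingPart P f).support, ∀ b ∈ (leadingPart P f).support, eqv P a b := by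
  intro a ha b hb
  rw [support_leadingPart] at ha hb
  exact eqv_of_mem_maxSet P ha hb

lemma leadingPart_idem (f : MvPolynomial (Fin n) k) :
    leadingPart P (leadingPart P f) = leadingPart P f :=
  leadingPart_of_homog P (leadingPart_homog P f)

lemma leadingPart_one : leadingPart P (1 : MvPolynomial (Fin n) k) = 1 := by
  apply leadingPart_of_homog
  intro a ha b hb
  have h1 : (1 : MvPolynomial (Fin n) k) = monomial 0 1 := by
    rw [monomial_zero']
    simp
  rw [h1, support_monomial] at ha hb
  simp only [if_neg (one_ne_zero (α := k)), Finset.mem_singleton] at ha hb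
  rw [ha, hb]
  exact eqv_refl P 0

/-! ### Part 3 : the leading exponent w.r.t. the refined total order -/

lemma exists_lts_max (s : Finset (Fin n →₀ ℕ)) (hs : s.Nonempty) :
    ∃ a ∈ s, ∀ b ∈ s, b ≠ a → lts P b a := by
  classical
  induction s using Finset.cons_induction with
  | empty => exact absurd hs (by simp)
  | cons x s hx ih =>
    rcases Finset.eq_empty_or_nonempty s with rfl | hs'
    · refine ⟨x, by simp, ?_⟩
      intro b hb hbx
      simp only [Finset.cons_empty, Finset.mem_singleton] at hb
      exact absurd hb hbx
    obtain ⟨a, ha, hamax⟩ := ih hs'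
    have hxa : x ≠ a := fun h => hx (h ▸ ha)
    rcases lts_total P hxa with h | h
    · refine ⟨a, Finset.mem_cons_of_mem ha, ?_⟩
      intro b hb hba
      rcases Finset.mem_cons.mp hb with rfl | hb'
      · exact h
      · exact hamax b hb' hba
    · refine ⟨x, Finset.mem_cons_self x s, ?_⟩
      intro b hb hbx
      rcases Finset.mem_cons.mp hb with rfl | hb'
      · exact absurd rfl hbx
      · rcases Classical.em (b = a) with rfl | hba
        · exact h
        · exact lts_trans P (hamax b hb' hba) h

noncomputable def ltexp (f : MvPolynomial (Fin n) k) : Fin n →₀ ℕ :=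
  if h : f = 0 then 0
  else Classical.choose (exists_lts_max P f.support
    (Finset.nonempty_iff_ne_empty.mpr (fun hs => h (support_eq_empty.mp hs))))

lemma ltexp_spec {f : MvPolynomial (Fin n) k} (hf : f ≠ 0) :
    ltexp P f ∈ f.support ∧ ∀ b ∈ f.support, b ≠ ltexp P f → lts P b (ltexp P f) := by
  rw [ltexp, dif_neg hf]
  exact Classical.choose_spec (exists_lts_max P f.support
    (Finset.nonempty_iff_ne_empty.mpr (fun hs => hf (support_eq_empty.mp hs))))

lemma ltexp_mem {f : MvPolynomial (Fin n) k} (hf : f ≠ 0) : ltexp P f ∈ f.support :=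
  (ltexp_spec P hf).1

lemma ltexp_max {f : MvPolynomial (Fin n) k} (hf : f ≠ 0) {b : Fin n →₀ ℕ}
    (hb : b ∈ f.support) (hne : b ≠ ltexp P f) : lts P b (ltexp P f) :=
  (ltexp_spec P hf).2 b hb hne

lemma ltexp_eq {f : MvPolynomial (Fin n) k} (hf : f ≠ 0) {a : Fin n →₀ ℕ}
    (ha : a ∈ f.support) (hmax : ∀ b ∈ f.support, b ≠ a → lts P b a) : ltexp P f = a := by
  by_contra h
  exact lts_asymm P (hmax _ (ltexp_mem P hf) h) (ltexp_max P hf ha (fun h' => h h'.symm))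

lemma not_mem_support_of_ltexp_lts {f : MvPolynomial (Fin n) k} (hf : f ≠ 0)
    {b : Fin n →₀ ℕ} (hb : lts P (ltexp P f) b) : b ∉ f.support := by
  intro hmem
  rcases Classical.em (b = ltexp P f) with rfl | hne
  · exact lts_irrefl P _ hb
  · exact lts_asymm P hb (ltexp_max P hf hmem hne)

noncomputable def ltc (f : MvPolynomial (Fin n) k) : k := coeff (ltexp P f) f

lemma ltc_ne_zero {f : MvPolynomial (Fin n) k} (hf : f ≠ 0) : ltc P f ≠ 0 :=
  mem_support_iff.mp (ltexp_mem P hf)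

lemma ltexp_mem_maxSet {f : MvPolynomial (Fin n) k} (hf : f ≠ 0) :
    ltexp P f ∈ maxSet P f := by
  refine (mem_maxSet P).mpr ⟨ltexp_mem P hf, fun b hb hlt => ?_⟩
  rcases Classical.em (b = ltexp P f) with rfl | hne
  · exact P.irrefl _ hlt
  · exact lts_asymm P (ltexp_max P hf hb hne) (Or.inl hlt)

lemma ltexp_leadingPart {f : MvPolynomial (Fin n) k} (hf : f ≠ 0) :
    ltexp P (leadingPart P f) = ltexp P f := by
  have hL : leadingPart P f ≠ 0 := fun h => hf ((leadingPart_eq_zero_iff P).mp h)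
  refine ltexp_eq P hL ?_ ?_
  · rw [support_leadingPart]; exact ltexp_mem_maxSet P hf
  · intro b hb hne
    rw [support_leadingPart] at hb
    exact ltexp_max P hf (maxSet_subset P f hb) hne

lemma ltc_leadingPart {f : MvPolynomial (Fin n) k} (hf : f ≠ 0) :
    ltc P (leadingPart P f) = ltc P f := by
  rw [ltc, ltexp_leadingPart P hf, coeff_leadingPart, if_pos (ltexp_mem_maxSet P hf)]
  rfl

lemma ltexp_sub_lts {f h : MvPolynomial (Fin n) k} (hf : f ≠ 0) (hh : h ≠ 0)
    (he : ltexp P h = ltexp P f) (hc : ltc P h = ltc P f) (hne : f - h ≠ 0) :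
    lts P (ltexp P (f - h)) (ltexp P f) := by
  set m := ltexp P (f - h) with hm
  have hmem : m ∈ (f - h).support := ltexp_mem P hne
  have hcoeff : coeff m (f - h) ≠ 0 := mem_support_iff.mp hmem
  have hmne : m ≠ ltexp P f := by
    intro h'
    apply hcoeff
    rw [coeff_sub, h']
    have : coeff (ltexp P f) h = ltc P f := by rw [← hc, ltc, he]
    rw [this]
    rw [ltc]
    ring
  rw [coeff_sub] at hcoeff
  rcases Classical.em (coeff m f = 0) with h0 | h0
  · have : coeff m h ≠ 0 := by intro hh'; rw [h0, hh'] at hcoeff; exact hcoeff (by ring)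
    have := ltexp_max P hh (mem_support_iff.mpr this) (by rw [he]; exact hmne)
    rwa [he] at this
  · exact ltexp_max P hf (mem_support_iff.mpr h0) hmne

/-! ### monomial multiples -/

lemma support_monomial_mul {f : MvPolynomial (Fin n) k} {δ : Fin n →₀ ℕ} {c : k}
    (hc : c ≠ 0) (a : Fin n →₀ ℕ) :
    a ∈ (monomial δ c * f).support ↔ ∃ b ∈ f.support, a = δ + b := by
  constructor
  · intro ha
    have := support_mul (monomial δ c) f ha
    rw [support_monomial, if_neg hc] at this
    obtain ⟨x, hx, y, hy, hxy⟩ := Finset.mem_add.mp this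
    rw [Finset.mem_singleton] at hx
    exact ⟨y, hy, by rw [← hxy, hx]⟩
  · rintro ⟨b, hb, rfl⟩
    rw [mem_support_iff, coeff_monomial_mul]
    exact mul_ne_zero hc (mem_support_iff.mp hb)

lemma ltexp_monomial_mul {f : MvPolynomial (Fin n) k} {δ : Fin n →₀ ℕ} {c : k}
    (hc : c ≠ 0) (hf : f ≠ 0) : ltexp P (monomial δ c * f) = δ + ltexp P f := by
  have hne : monomial δ c * f ≠ 0 := by
    intro h
    have := support_monomial_mul hc (δ + ltexp P f) |>.mpr ⟨ltexp P f, ltexp_mem P hf, rfl⟩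
    rw [h] at this
    simpa using this
  refine ltexp_eq P hne ?_ ?_
  · exact support_monomial_mul hc _ |>.mpr ⟨ltexp P f, ltexp_mem P hf, rfl⟩
  · intro b hb hbne
    obtain ⟨b', hb', rfl⟩ := support_monomial_mul hc b |>.mp hb
    have : b' ≠ ltexp P f := fun h => hbne (by rw [h])
    have := lts_add_right P δ (ltexp_max P hf hb' this)
    rwa [add_comm b' δ, add_comm (ltexp P f) δ] at this

lemma ltc_monomial_mul {f : MvPolynomial (Fin n) k} {δ : Fin n →₀ ℕ} {c : k}
    (hc : c ≠ 0) (hf : f ≠ 0) : ltc P (monomial δ c * f) = c * ltc P f := by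
  rw [ltc, ltexp_monomial_mul P hc hf, coeff_monomial_mul]
  rfl

/-! ### degrees and ecart -/

def mdeg (a : Fin n →₀ ℕ) : ℕ := ∑ i, a i

lemma mdeg_add (a b : Fin n →₀ ℕ) : mdeg (a + b) = mdeg a + mdeg b := by
  rw [mdeg, mdeg, mdeg, ← Finset.sum_add_distrib]
  simp

lemma mdeg_eq_sum (a : Fin n →₀ ℕ) : (a.sum fun _ e => e) = mdeg a :=
  Finsupp.sum_fintype a _ (fun _ => rfl)

lemma mdeg_le_totalDegree {f : MvPolynomial (Fin n) k} {a : Fin n →₀ ℕ}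
    (ha : a ∈ f.support) : mdeg a ≤ f.totalDegree := by
  rw [← mdeg_eq_sum]
  exact le_totalDegree ha

noncomputable def ecart (f : MvPolynomial (Fin n) k) : ℕ :=
  f.totalDegree - mdeg (ltexp P f)

lemma totalDegree_eq_mdeg_add_ecart {f : MvPolynomial (Fin n) k} (hf : f ≠ 0) :
    f.totalDegree = mdeg (ltexp P f) + ecart P f :=
  (Nat.add_sub_cancel' (mdeg_le_totalDegree (ltexp_mem P hf))).symm

/-! ### Part 4 : multiplicativity of the leading part -/

section Mult

variable {f g : MvPolynomial (Fin n) k}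

lemma mem_support_mul_decomp {m : Fin n →₀ ℕ} (hm : m ∈ (f * g).support) :
    ∃ a ∈ f.support, ∃ b ∈ g.support, m = a + b := by
  have := support_mul f g hm
  obtain ⟨a, ha, b, hb, hab⟩ := Finset.mem_add.mp this
  exact ⟨a, ha, b, hb, hab.symm⟩

lemma dominated_mul (hf : f ≠ 0) (hg : g ≠ 0) {m : Fin n →₀ ℕ}
    (hm : m ∈ (f * g).support) :
    eqv P m (ltexp P f + ltexp P g) ∨ P.lt m (ltexp P f + ltexp P g) := by
  obtain ⟨a, ha, b, hb, rfl⟩ := mem_support_mul_decomp hm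
  have hda := dominated P ha (ltexp_mem_maxSet P hf)
  have hdb := dominated P hb (ltexp_mem_maxSet P hg)
  rcases hda with hda | hda <;> rcases hdb with hdb | hdb
  · exact Or.inl (eqv_add P hda hdb)
  · refine Or.inr ?_
    have := lt_add P hdb hda
    rw [add_comm b a, add_comm (ltexp P g) (ltexp P f)] at this
    exact this
  · exact Or.inr (lt_add P hda hdb)
  · exact Or.inr (lt_add_lt P hda hdb)

lemma not_top_pair (hf : f ≠ 0) (hg : g ≠ 0) {a b : Fin n →₀ ℕ}
    (heqv : eqv P (a + b) (ltexp P f + ltexp P g))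
    (hnot : ¬ (a ∈ maxSet P f ∧ b ∈ maxSet P g)) :
    a ∉ f.support ∨ b ∉ g.support := by
  by_contra hcon
  push_neg at hcon
  obtain ⟨ha, hb⟩ := hcon
  have hda := dominated P ha (ltexp_mem_maxSet P hf)
  have hdb := dominated P hb (ltexp_mem_maxSet P hg)
  have hlt : P.lt (a + b) (ltexp P f + ltexp P g) := by
    have hcases : (a ∈ maxSet P f → b ∉ maxSet P g) := fun h1 h2 => hnot ⟨h1, h2⟩
    rcases hda with hda | hda
    · -- a eqv top f
      rcases hdb with hdb | hdb
      · -- both eqv : then both in maxSet, contradiction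
        exfalso
        apply hnot
        constructor
        · refine (mem_maxSet P).mpr ⟨ha, fun c hc hlt => ?_⟩
          rcases dominated P hc (ltexp_mem_maxSet P hf) with h' | h'
          · exact (eqv_trans P hda (eqv_symm P h')).1 hlt
          · exact hda.1 (P.trans hlt h')
        · refine (mem_maxSet P).mpr ⟨hb, fun c hc hlt => ?_⟩
          rcases dominated P hc (ltexp_mem_maxSet P hg) with h' | h'
          · exact (eqv_trans P hdb (eqv_symm P h')).1 hlt
          · exact hdb.1 (P.trans hlt h')
      · have := lt_add P hdb hda
        rw [add_comm b a, add_comm (ltexp P g) (ltexp P f)] at this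
        exact this
    · rcases hdb with hdb | hdb
      · exact lt_add P hda hdb
      · exact lt_add_lt P hda hdb
  exact heqv.1 hlt

lemma coeff_mul_top (hf : f ≠ 0) (hg : g ≠ 0) {m : Fin n →₀ ℕ}
    (heqv : eqv P m (ltexp P f + ltexp P g)) :
    coeff m (f * g) = coeff m (leadingPart P f * leadingPart P g) := by
  rw [coeff_mul, coeff_mul]
  apply Finset.sum_congr rfl
  rintro ⟨a, b⟩ hab
  have habm : a + b = m := Finset.HasAntidiagonal.mem_antidiagonal.mp hab
  simp only
  by_cases hmax : a ∈ maxSet P f ∧ b ∈ maxSet P g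
  · rw [coeff_leadingPart, coeff_leadingPart, if_pos hmax.1, if_pos hmax.2]
  · have := not_top_pair P hf hg (by rwa [habm]) hmax
    rcases this with h | h
    · rw [notMem_support_iff.mp h]
      have : a ∉ maxSet P f := fun hc => h (maxSet_subset P f hc)
      rw [coeff_leadingPart, if_neg this]
      ring
    · rw [notMem_support_iff.mp h]
      have : b ∉ maxSet P g := fun hc => h (maxSet_subset P g hc)
      rw [coeff_leadingPart (P := P) g, if_neg this]
      ring

lemma coeff_mul_lead_off_top (hf : f ≠ 0) (hg : g ≠ 0) {m : Fin n →₀ ℕ}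
    (hne : ¬ eqv P m (ltexp P f + ltexp P g)) :
    coeff m (leadingPart P f * leadingPart P g) = 0 := by
  rw [coeff_mul]
  apply Finset.sum_eq_zero
  rintro ⟨a, b⟩ hab
  have habm : a + b = m := Finset.HasAntidiagonal.mem_antidiagonal.mp hab
  simp only
  by_cases hmax : a ∈ maxSet P f ∧ b ∈ maxSet P g
  · exfalso
    apply hne
    rw [← habm]
    exact eqv_add P (eqv_of_mem_maxSet P hmax.1 (ltexp_mem_maxSet P hf))
      (eqv_of_mem_maxSet P hmax.2 (ltexp_mem_maxSet P hg))
  · rcases Classical.em (a ∈ maxSet P f) with h1 | h1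
    · have h2 : b ∉ maxSet P g := fun hc => hmax ⟨h1, hc⟩
      rw [coeff_leadingPart (P := P) g, if_neg h2]
      ring
    · rw [coeff_leadingPart, if_neg h1]
      ring

lemma leadingPart_mul_ne_zero (hf : f ≠ 0) (hg : g ≠ 0) :
    leadingPart P f * leadingPart P g ≠ 0 :=
  mul_ne_zero (fun h => hf ((leadingPart_eq_zero_iff P).mp h))
    (fun h => hg ((leadingPart_eq_zero_iff P).mp h))

lemma maxSet_mul (hf : f ≠ 0) (hg : g ≠ 0) :
    maxSet P (f * g) =
      (f * g).support.filter (fun m => eqv P m (ltexp P f + ltexp P g)) := by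
  obtain ⟨μ, hμ⟩ := Finset.nonempty_iff_ne_empty.mpr
    (fun h => leadingPart_mul_ne_zero P hf hg (support_eq_empty.mp h))
  have hμtop : eqv P μ (ltexp P f + ltexp P g) := by
    by_contra hcon
    exact (mem_support_iff.mp hμ) (coeff_mul_lead_off_top P hf hg hcon)
  have hμfg : μ ∈ (f * g).support := by
    rw [mem_support_iff, coeff_mul_top P hf hg hμtop]
    exact mem_support_iff.mp hμ
  ext m
  rw [mem_maxSet, Finset.mem_filter]
  constructor
  · rintro ⟨hm, hmax⟩
    refine ⟨hm, ?_⟩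
    by_contra hcon
    have hlt : P.lt m (ltexp P f + ltexp P g) := by
      rcases dominated_mul P hf hg hm with h | h
      · exact absurd h hcon
      · exact h
    exact hmax μ hμfg (lt_of_lt_of_eqv P hlt (eqv_symm P hμtop))
  · rintro ⟨hm, heqv⟩
    refine ⟨hm, fun m' hm' hlt => ?_⟩
    rcases dominated_mul P hf hg hm' with h | h
    · exact (eqv_trans P heqv (eqv_symm P h)).1 hlt
    · exact heqv.1 (P.trans hlt h)

theorem leadingPart_mul (f g : MvPolynomial (Fin n) k) :
    leadingPart P (f * g) = leadingPart P f * leadingPart P g := by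
  rcases Classical.em (f = 0) with rfl | hf
  · simp [(leadingPart_eq_zero_iff P).mpr rfl]
  rcases Classical.em (g = 0) with rfl | hg
  · simp [(leadingPart_eq_zero_iff P).mpr rfl]
  ext m
  rw [coeff_leadingPart, maxSet_mul P hf hg]
  rcases Classical.em (eqv P m (ltexp P f + ltexp P g)) with htop | htop
  · split_ifs with hmem
    · exact coeff_mul_top P hf hg htop
    · have hm : m ∉ (f * g).support := fun hc => hmem (Finset.mem_filter.mpr ⟨hc, htop⟩)
      rw [← coeff_mul_top P hf hg htop]
      exact (notMem_support_iff.mp hm).symm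
  · split_ifs with hmem
    · exact absurd (Finset.mem_filter.mp hmem).2 htop
    · exact (coeff_mul_lead_off_top P hf hg htop).symm

end Mult

/-! ### Part 5 : homogeneous components and matching leading parts inside a span -/

section Span

noncomputable def filterPoly (pr : (Fin n →₀ ℕ) → Prop) (c : MvPolynomial (Fin n) k) :
    MvPolynomial (Fin n) k :=
  ∑ a ∈ c.support.filter pr, monomial a (coeff a c)

lemma coeff_filterPoly (pr : (Fin n →₀ ℕ) → Prop) (c : MvPolynomial (Fin n) k)
    (a : Fin n →₀ ℕ) :
    coeff a (filterPoly pr c) = if pr a then coeff a c else 0 := by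
  rw [filterPoly, coeff_sum]
  simp only [coeff_monomial]
  rw [Finset.sum_ite_eq' (c.support.filter pr) a (fun b => coeff b c)]
  split_ifs with h1 h2 h2
  · rfl
  · exact absurd (Finset.mem_filter.mp h1).2 h2
  · exact (notMem_support_iff.mp (fun hc => h1 (Finset.mem_filter.mpr ⟨hc, h2⟩))).symm
  · rfl

lemma mem_support_filterPoly {pr : (Fin n →₀ ℕ) → Prop} {c : MvPolynomial (Fin n) k}
    {a : Fin n →₀ ℕ} (ha : a ∈ (filterPoly pr c).support) : a ∈ c.support ∧ pr a := by
  rw [mem_support_iff, coeff_filterPoly] at ha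
  split_ifs at ha with h
  · exact ⟨mem_support_iff.mpr ha, h⟩
  · exact absurd rfl ha

lemma filterPoly_add (pr : (Fin n →₀ ℕ) → Prop) (c d : MvPolynomial (Fin n) k) :
    filterPoly pr (c + d) = filterPoly pr c + filterPoly pr d := by
  ext a
  simp only [coeff_add, coeff_filterPoly]
  split_ifs <;> simp

noncomputable def comp (d : Fin n →₀ ℕ) (f : MvPolynomial (Fin n) k) :
    MvPolynomial (Fin n) k :=
  filterPoly (fun a => eqv P a d) f

lemma comp_eq_self_of {d : Fin n →₀ ℕ} {f : MvPolynomial (Fin n) k}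
    (h : ∀ a ∈ f.support, eqv P a d) : comp P d f = f := by
  ext a
  rw [comp, coeff_filterPoly]
  split_ifs with h1
  · rfl
  · exact (notMem_support_iff.mp (fun hc => h1 (h a hc))).symm

lemma comp_eq_zero_of {d : Fin n →₀ ℕ} {f : MvPolynomial (Fin n) k}
    (h : ∀ a ∈ f.support, ¬ eqv P a d) : comp P d f = 0 := by
  ext a
  rw [comp, coeff_filterPoly]
  split_ifs with h1
  · exact notMem_support_iff.mp (fun hc => h a hc h1)
  · rfl

lemma filterPoly_zero (pr : (Fin n →₀ ℕ) → Prop) : filterPoly pr (0 : MvPolynomial (Fin n) k) = 0 := by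
  simp [filterPoly]

noncomputable def filterPolyHom (pr : (Fin n →₀ ℕ) → Prop) :
    MvPolynomial (Fin n) k →+ MvPolynomial (Fin n) k where
  toFun := filterPoly pr
  map_zero' := filterPoly_zero pr
  map_add' := filterPoly_add pr

lemma comp_sum {d : Fin n →₀ ℕ} {m : ℕ} (F : Fin m → MvPolynomial (Fin n) k) :
    comp P d (∑ i, F i) = ∑ i, comp P d (F i) :=
  map_sum (filterPolyHom (fun a => eqv P a d)) F Finset.univ

lemma mem_maxSet_iff_eqv {f : MvPolynomial (Fin n) k} (hf : f ≠ 0) {a : Fin n →₀ ℕ} :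
    a ∈ maxSet P f ↔ a ∈ f.support ∧ eqv P a (ltexp P f) := by
  constructor
  · intro ha
    exact ⟨maxSet_subset P f ha, eqv_of_mem_maxSet P ha (ltexp_mem_maxSet P hf)⟩
  · rintro ⟨ha, heqv⟩
    refine (mem_maxSet P).mpr ⟨ha, fun b hb hlt => ?_⟩
    rcases dominated P hb (ltexp_mem_maxSet P hf) with h' | h'
    · exact (eqv_trans P heqv (eqv_symm P h')).1 hlt
    · exact heqv.1 (P.trans hlt h')

lemma leadingPart_eq_comp {f : MvPolynomial (Fin n) k} (hf : f ≠ 0) :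
    leadingPart P f = comp P (ltexp P f) f := by
  rw [leadingPart_eq_sum, comp, filterPoly]
  congr 1
  ext a
  rw [Finset.mem_filter, ← mem_maxSet_iff_eqv P hf]

lemma support_sub_leadingPart {f : MvPolynomial (Fin n) k} (hf : f ≠ 0) {b : Fin n →₀ ℕ}
    (hb : b ∈ (f - leadingPart P f).support) : P.lt b (ltexp P f) := by
  have hcoeff : coeff b (f - leadingPart P f) ≠ 0 := mem_support_iff.mp hb
  rw [coeff_sub, coeff_leadingPart] at hcoeff
  split_ifs at hcoeff with h
  · exact absurd (by ring) hcoeff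
  · have hbsupp : b ∈ f.support := by
      rw [mem_support_iff]
      intro h0
      exact hcoeff (by rw [h0]; ring)
    have : ¬ eqv P b (ltexp P f) := fun he => h ((mem_maxSet_iff_eqv P hf).mpr ⟨hbsupp, he⟩)
    rcases dominated P hbsupp (ltexp_mem_maxSet P hf) with h' | h'
    · exact absurd h' this
    · exact h'

lemma leadingPart_add_lower {d : Fin n →₀ ℕ} {z low : MvPolynomial (Fin n) k} (hz : z ≠ 0)
    (hzh : ∀ a ∈ z.support, eqv P a d) (hlow : ∀ b ∈ low.support, P.lt b d) :
    leadingPart P (z + low) = z := by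
  have hcoeff_eqv : ∀ a ∈ z.support, coeff a (z + low) = coeff a z := by
    intro a ha
    rw [coeff_add]
    have h0 : coeff a low = 0 :=
      notMem_support_iff.mp (fun hc => absurd (hlow a hc) (hzh a ha).1)
    rw [h0, add_zero]
  have hsupp_z : ∀ a ∈ z.support, a ∈ (z + low).support := by
    intro a ha
    rw [mem_support_iff, hcoeff_eqv a ha]
    exact mem_support_iff.mp ha
  have hmax : maxSet P (z + low) = z.support := by
    ext a
    rw [mem_maxSet]
    constructor
    · rintro ⟨haF, hamax⟩
      by_contra hza
      have halow : a ∈ low.support := by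
        rw [mem_support_iff]
        intro h0
        apply mem_support_iff.mp haF
        rw [coeff_add, h0, notMem_support_iff.mp hza, add_zero]
      obtain ⟨a', ha'⟩ := Finset.nonempty_iff_ne_empty.mpr
        (fun h => hz (support_eq_empty.mp h))
      exact hamax a' (hsupp_z a' ha')
        (lt_of_lt_of_eqv P (hlow a halow) (eqv_symm P (hzh a' ha')))
    · intro haz
      refine ⟨hsupp_z a haz, fun b hbF hlt => ?_⟩
      rcases Classical.em (b ∈ z.support) with hbz | hbz
      · exact (eqv_trans P (hzh a haz) (eqv_symm P (hzh b hbz))).1 hlt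
      · have hblow : b ∈ low.support := by
          rw [mem_support_iff]
          intro h0
          apply mem_support_iff.mp hbF
          rw [coeff_add, h0, notMem_support_iff.mp hbz, zero_add]
        exact (hzh a haz).1 (P.trans hlt (hlow b hblow))
  rw [leadingPart_eq_sum, hmax]
  rw [Finset.sum_congr rfl (fun a ha => by rw [hcoeff_eqv a ha])]
  exact support_sum_monomial_coeff z

lemma comp_mul_homog {d : Fin n →₀ ℕ} {c x : MvPolynomial (Fin n) k} (hx : x ≠ 0)
    (hxh : ∀ a ∈ x.support, eqv P a (ltexp P x)) :
    comp P d (c * x) = filterPoly (fun a => eqv P (a + ltexp P x) d) c * x := by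
  set e := ltexp P x with he
  set c1 := filterPoly (fun a => eqv P (a + e) d) c with hc1
  set c2 := filterPoly (fun a => ¬ eqv P (a + e) d) c with hc2
  have hsplit : c = c1 + c2 := by
    ext a
    rw [coeff_add, hc1, hc2, coeff_filterPoly, coeff_filterPoly]
    split_ifs with h
    · rw [add_zero]
    · rw [zero_add]
  have h1 : comp P d (c1 * x) = c1 * x := by
    apply comp_eq_self_of
    intro m hm
    obtain ⟨a, ha, b, hb, rfl⟩ := mem_support_mul_decomp hm
    have ha' := mem_support_filterPoly ha
    have hbe : eqv P b e := hxh b hb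
    have : eqv P (a + b) (a + e) := by
      rw [add_comm a b, add_comm a e]
      exact eqv_add_right P a hbe
    exact eqv_trans P this ha'.2
  have h2 : comp P d (c2 * x) = 0 := by
    apply comp_eq_zero_of
    intro m hm
    obtain ⟨a, ha, b, hb, rfl⟩ := mem_support_mul_decomp hm
    have ha' := mem_support_filterPoly ha
    have hbe : eqv P b e := hxh b hb
    have heq : eqv P (a + b) (a + e) := by
      rw [add_comm a b, add_comm a e]
      exact eqv_add_right P a hbe
    exact fun hcon => ha'.2 (eqv_trans P (eqv_symm P heq) hcon)
  calc comp P d (c * x) = comp P d (c1 * x + c2 * x) := by rw [← add_mul, ← hsplit]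
    _ = comp P d (c1 * x) + comp P d (c2 * x) := by rw [comp, comp, comp, filterPoly_add]
    _ = c1 * x := by rw [h1, h2, add_zero]

theorem exists_leadingPart_match {J : Ideal (MvPolynomial (Fin n) k)}
    {z : MvPolynomial (Fin n) k}
    (hz : z ∈ Ideal.span (leadingPart P '' (J : Set (MvPolynomial (Fin n) k))))
    (hzne : z ≠ 0) :
    ∃ h ∈ J, leadingPart P h = leadingPart P z := by
  obtain ⟨m, c, x, hsum⟩ := Submodule.mem_span_set'.mp hz
  have hx : ∀ i, ∃ h ∈ J, leadingPart P h = (x i : MvPolynomial (Fin n) k) := by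
    intro i
    obtain ⟨h, hh, hhx⟩ := (x i).2
    exact ⟨h, hh, hhx⟩
  choose hp hpJ hpx using hx
  set d := ltexp P z with hd
  set g : Fin m → MvPolynomial (Fin n) k := fun i =>
    if hxi : (x i : MvPolynomial (Fin n) k) = 0 then 0
    else filterPoly (fun a => eqv P (a + ltexp P (x i : MvPolynomial (Fin n) k)) d) (c i)
    with hg
  set h := ∑ i, g i * hp i with hh
  have hhJ : h ∈ J := Ideal.sum_mem J (fun i _ => Ideal.mul_mem_left J (g i) (hpJ i))
  refine ⟨h, hhJ, ?_⟩
  -- first : the top part of z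
  have hzcomp : comp P d z = leadingPart P z := (leadingPart_eq_comp P hzne).symm
  -- comp d z = ∑ g i * x i
  have hcompsum : comp P d z = ∑ i, g i * (x i : MvPolynomial (Fin n) k) := by
    rw [← hsum, comp_sum]
    apply Finset.sum_congr rfl
    intro i _
    rw [smul_eq_mul]
    by_cases hxi : (x i : MvPolynomial (Fin n) k) = 0
    · rw [hxi, mul_zero, hg]
      simp only [hxi, dif_pos]
      rw [zero_mul]
      exact comp_eq_zero_of P (by simp)
    · rw [hg]
      simp only [hxi, dif_neg, not_false_iff]
      refine comp_mul_homog P hxi ?_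
      intro a ha
      rw [← hpx i] at ha ⊢
      have := leadingPart_homog P (hp i) a ha _ (ltexp_mem P (by rw [hpx i]; exact hxi))
      exact this
  -- h = (leadingPart z) + lower
  have hlowbound : ∀ b ∈ (h - leadingPart P z).support, P.lt b d := by
    intro b hb
    have hcoeff : coeff b (h - leadingPart P z) ≠ 0 := mem_support_iff.mp hb
    have hrw : h - leadingPart P z =
        ∑ i, g i * (hp i - (x i : MvPolynomial (Fin n) k)) := by
      rw [hh, ← hzcomp, hcompsum, ← Finset.sum_sub_distrib]
      apply Finset.sum_congr rfl
      intro i _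
      rw [mul_sub]
    rw [hrw] at hcoeff
    have : ∃ i, coeff b (g i * (hp i - (x i : MvPolynomial (Fin n) k))) ≠ 0 := by
      by_contra hcon
      push_neg at hcon
      apply hcoeff
      rw [coeff_sum]
      exact Finset.sum_eq_zero (fun i _ => hcon i)
    obtain ⟨i, hi⟩ := this
    have hxi : (x i : MvPolynomial (Fin n) k) ≠ 0 := by
      intro h0
      apply hi
      rw [hg]
      simp only [h0, dif_pos]
      rw [zero_mul, coeff_zero]
    have hpi : hp i ≠ 0 := by
      intro h0
      apply hxi
      rw [← hpx i, h0, (leadingPart_eq_zero_iff P).mpr rfl]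
    obtain ⟨a, ha, b', hb', rfl⟩ := mem_support_mul_decomp (mem_support_iff.mpr hi)
    have hag : eqv P (a + ltexp P (x i : MvPolynomial (Fin n) k)) d := by
      rw [hg] at ha
      simp only [hxi, dif_neg, not_false_iff] at ha
      exact (mem_support_filterPoly ha).2
    have hb'lt : P.lt b' (ltexp P (hp i)) := by
      have : hp i - (x i : MvPolynomial (Fin n) k) = hp i - leadingPart P (hp i) := by
        rw [hpx i]
      rw [this] at hb'
      exact support_sub_leadingPart P hpi hb'
    have hexi : ltexp P (x i : MvPolynomial (Fin n) k) = ltexp P (hp i) := by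
      rw [← hpx i]
      exact ltexp_leadingPart P hpi
    have h1 : P.lt (a + b') (a + ltexp P (x i : MvPolynomial (Fin n) k)) := by
      rw [hexi, add_comm a b', add_comm a (ltexp P (hp i))]
      exact P.compat a hb'lt
    exact lt_of_lt_of_eqv P h1 hag
  have hLzne : leadingPart P z ≠ 0 := fun h0 => hzne ((leadingPart_eq_zero_iff P).mp h0)
  have hLzh : ∀ a ∈ (leadingPart P z).support, eqv P a d := by
    intro a ha
    rw [support_leadingPart] at ha
    exact eqv_of_mem_maxSet P ha (ltexp_mem_maxSet P hzne)
  have hdecomp : h = leadingPart P z + (h - leadingPart P z) := by ring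
  rw [hdecomp]
  exact leadingPart_add_lower P hLzne hLzh hlowbound

end Span

/-! ### Part 6 : the key lemma (Mora-style reduction) -/

section KeyLemma

lemma leadingPart_eq_one_of {u : MvPolynomial (Fin n) k}
    (hu : ∀ a ∈ (u - 1).support, P.lt a 0) : leadingPart P u = 1 := by
  have hdecomp : u = 1 + (u - 1) := by ring
  rw [hdecomp]
  apply leadingPart_add_lower P (one_ne_zero) _ hu
  intro a ha
  have h1 : (1 : MvPolynomial (Fin n) k) = monomial 0 1 := by rw [monomial_zero']; simp
  rw [h1, support_monomial, if_neg (one_ne_zero (α := k))] at ha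
  rw [Finset.mem_singleton.mp ha]
  exact eqv_refl P 0

lemma finite_mdeg_le (D : ℕ) : {a : Fin n →₀ ℕ | mdeg a ≤ D}.Finite := by
  have hsub : {a : Fin n →₀ ℕ | mdeg a ≤ D} ⊆
      Set.range (fun v : Fin n → Fin (D+1) =>
        Finsupp.equivFunOnFinite.symm (fun i => (v i : ℕ))) := by
    intro a ha
    have hle : ∀ i, a i ≤ D := by
      intro i
      have h1 : a i ≤ mdeg a :=
        Finset.single_le_sum (f := fun i => a i) (fun _ _ => Nat.zero_le _) (Finset.mem_univ i)
      exact h1.trans ha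
    refine ⟨fun i => ⟨a i, Nat.lt_succ_of_le (hle i)⟩, ?_⟩
    ext i
    simp [Finsupp.equivFunOnFinite]
  exact Set.Finite.subset (Set.finite_range _) hsub

variable {P}

structure St (n : ℕ) (k : Type*) [Field k] where
  g : MvPolynomial (Fin n) k
  u : MvPolynomial (Fin n) k
  w : MvPolynomial (Fin n) k
  hist : List (MvPolynomial (Fin n) k × MvPolynomial (Fin n) k × MvPolynomial (Fin n) k)

variable (P)

def RedSet (J : Ideal (MvPolynomial (Fin n) k)) (g : MvPolynomial (Fin n) k) :
    Set (MvPolynomial (Fin n) k) :=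
  {h | h ∈ J ∧ h ≠ 0 ∧ ltexp P h = ltexp P g ∧ ltc P h = ltc P g}

def EE (J : Ideal (MvPolynomial (Fin n) k)) (s : St n k) : Set ℕ :=
  {e | (∃ h ∈ RedSet P J s.g, ecart P h = e) ∨
    (∃ t ∈ s.hist, ltexp P t.1 ≤ ltexp P s.g ∧ ecart P t.1 = e)}

noncomputable def emin (J : Ideal (MvPolynomial (Fin n) k)) (s : St n k) : ℕ :=
  sInf (EE P J s)

noncomputable def mon (s : St n k)
    (t : MvPolynomial (Fin n) k × MvPolynomial (Fin n) k × MvPolynomial (Fin n) k) :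
    MvPolynomial (Fin n) k :=
  monomial (ltexp P s.g - ltexp P t.1) (ltc P s.g / ltc P t.1)

def StGood (J : Ideal (MvPolynomial (Fin n) k)) (c : MvPolynomial (Fin n) k)
    (s : St n k) : Prop :=
  s.g ≠ 0 ∧ s.w ∈ J ∧ s.g = s.u * c - s.w ∧ (∀ a ∈ (s.u - 1).support, P.lt a 0) ∧
  (∀ t ∈ s.hist, t.1 ≠ 0 ∧ t.2.2 ∈ J ∧ t.1 = t.2.1 * c - t.2.2 ∧
    (∀ a ∈ (t.2.1 - 1).support, P.lt a 0) ∧ lts P (ltexp P s.g) (ltexp P t.1))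

def StepRel (J : Ideal (MvPolynomial (Fin n) k)) (s s' : St n k) : Prop :=
  s'.hist = (s.g, s.u, s.w) :: s.hist ∧
  ((∃ h ∈ RedSet P J s.g, ecart P h = emin P J s ∧
      s'.g = s.g - h ∧ s'.u = s.u ∧ s'.w = s.w + h) ∨
   (∃ t ∈ s.hist, ltexp P t.1 ≤ ltexp P s.g ∧ ecart P t.1 = emin P J s ∧
      s'.g = s.g - mon P s t * t.1 ∧ s'.u = s.u - mon P s t * t.2.1 ∧
      s'.w = s.w - mon P s t * t.2.2))

variable {J C : Ideal (MvPolynomial (Fin n) k)} {c : MvPolynomial (Fin n) k}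

lemma StGood.gC (hJC : J ≤ C) (hc : c ∈ C) {s : St n k} (hs : StGood P J c s) : s.g ∈ C := by
  rw [hs.2.2.1]
  exact C.sub_mem (C.mul_mem_left s.u hc) (hJC hs.2.1)

lemma step_exists (hJC : J ≤ C) (hc : c ∈ C)
    (hred : ∀ r ∈ C, r ≠ 0 → (RedSet P J r).Nonempty)
    (s : St n k) (hs : StGood P J c s) : ∃ s', StepRel P J s s' := by
  obtain ⟨h0, hh0⟩ := hred s.g (hs.gC P hJC hc) hs.1
  have hEE : (EE P J s).Nonempty := ⟨ecart P h0, Or.inl ⟨h0, hh0, rfl⟩⟩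
  have hmem : emin P J s ∈ EE P J s := Nat.sInf_mem hEE
  rcases hmem with ⟨h, hh, he⟩ | ⟨t, ht, hdvd, he⟩
  · exact ⟨⟨s.g - h, s.u, s.w + h, (s.g, s.u, s.w) :: s.hist⟩, rfl,
      Or.inl ⟨h, hh, he, rfl, rfl, rfl⟩⟩
  · exact ⟨⟨s.g - mon P s t * t.1, s.u - mon P s t * t.2.1, s.w - mon P s t * t.2.2,
      (s.g, s.u, s.w) :: s.hist⟩, rfl, Or.inr ⟨t, ht, hdvd, he, rfl, rfl, rfl⟩⟩

/-- The properties of the element subtracted in a reduction step. -/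
lemma step_y_facts {s s' : St n k} (hs : StGood P J c s) (hrel : StepRel P J s s') :
    ∃ y : MvPolynomial (Fin n) k, s'.g = s.g - y ∧ y ≠ 0 ∧
      ltexp P y = ltexp P s.g ∧ ltc P y = ltc P s.g ∧
      y.totalDegree ≤ mdeg (ltexp P s.g) + emin P J s := by
  rcases hrel.2 with ⟨h, hh, he, hg', -, -⟩ | ⟨t, ht, hdvd, he, hg', -, -⟩
  · refine ⟨h, hg', hh.2.1, hh.2.2.1, hh.2.2.2, ?_⟩
    rw [totalDegree_eq_mdeg_add_ecart P hh.2.1, hh.2.2.1, he]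
  · have htfacts := hs.2.2.2.2 t ht
    have ht1 : t.1 ≠ 0 := htfacts.1
    have hcne : ltc P s.g / ltc P t.1 ≠ 0 :=
      div_ne_zero (ltc_ne_zero P hs.1) (ltc_ne_zero P ht1)
    have hsum : ltexp P s.g - ltexp P t.1 + ltexp P t.1 = ltexp P s.g :=
      tsub_add_cancel_of_le hdvd
    refine ⟨mon P s t * t.1, hg', ?_, ?_, ?_, ?_⟩
    · rw [mon]
      exact mul_ne_zero (fun hm => hcne (monomial_eq_zero.mp hm)) ht1
    · rw [mon, ltexp_monomial_mul P hcne ht1, hsum]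
    · rw [mon, ltc_monomial_mul P hcne ht1, div_mul_cancel₀ _ (ltc_ne_zero P ht1)]
    · calc (mon P s t * t.1).totalDegree
          ≤ (mon P s t).totalDegree + t.1.totalDegree := totalDegree_mul _ _
        _ = mdeg (ltexp P s.g - ltexp P t.1) + t.1.totalDegree := by
            rw [mon, totalDegree_monomial _ hcne, mdeg_eq_sum]
        _ = mdeg (ltexp P s.g - ltexp P t.1) + (mdeg (ltexp P t.1) + ecart P t.1) := by
            rw [← totalDegree_eq_mdeg_add_ecart P ht1]
        _ = mdeg (ltexp P s.g - ltexp P t.1 + ltexp P t.1) + ecart P t.1 := by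
            rw [mdeg_add]; ring
        _ = mdeg (ltexp P s.g) + emin P J s := by rw [hsum, he]

lemma step_good (hsat : ∀ u x : MvPolynomial (Fin n) k,
      leadingPart P u = 1 → u * x ∈ J → x ∈ J)
    (hcJ : c ∉ J) {s s' : St n k} (hs : StGood P J c s) (hrel : StepRel P J s s') :
    StGood P J c s' ∧ lts P (ltexp P s'.g) (ltexp P s.g) := by
  -- the invariants on u', w', and the equation
  have hbasic : s'.w ∈ J ∧ s'.g = s'.u * c - s'.w ∧ (∀ a ∈ (s'.u - 1).support, P.lt a 0) := by
    rcases hrel.2 with ⟨h, hh, -, hg', hu', hw'⟩ | ⟨t, ht, hdvd, -, hg', hu', hw'⟩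
    · refine ⟨by rw [hw']; exact J.add_mem hs.2.1 hh.1, ?_, ?_⟩
      · rw [hg', hu', hw', hs.2.2.1]; ring
      · rw [hu']; exact hs.2.2.2.1
    · have htfacts := hs.2.2.2.2 t ht
      have hδ : P.lt (ltexp P s.g - ltexp P t.1) 0 := by
        rw [← lts_zero_iff P]
        apply lts_cancel_right P (c := ltexp P t.1)
        rw [tsub_add_cancel_of_le hdvd, zero_add]
        exact htfacts.2.2.2.2
      refine ⟨by rw [hw']; exact J.sub_mem hs.2.1 (J.mul_mem_left _ htfacts.2.1), ?_, ?_⟩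
      · rw [hg', hu', hw', hs.2.2.1, htfacts.2.2.1]; ring
      · rw [hu']
        intro a ha
        have hsplit : s.u - mon P s t * t.2.1 - 1 = (s.u - 1) - mon P s t * t.2.1 := by ring
        rw [hsplit] at ha
        have hcoeff : coeff a (s.u - 1) - coeff a (mon P s t * t.2.1) ≠ 0 := by
          rw [← coeff_sub]; exact mem_support_iff.mp ha
        rcases Classical.em (a ∈ (s.u - 1).support) with h1 | h1
        · exact hs.2.2.2.1 a h1
        · have h2 : a ∈ (mon P s t * t.2.1).support := by
            rw [mem_support_iff]
            intro h0
            rw [notMem_support_iff.mp h1, h0] at hcoeff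
            exact hcoeff (by ring)
          rcases Classical.em (ltc P s.g / ltc P t.1 = 0) with hc0 | hc0
          · rw [mon] at h2
            rw [monomial_eq_zero.mpr hc0] at h2
            rw [zero_mul] at h2
            simp at h2
          · rw [mon] at h2
            obtain ⟨b, hb, rfl⟩ := (support_monomial_mul hc0 a).mp h2
            rcases Classical.em (b = 0) with rfl | hb0
            · rw [add_zero]; exact hδ
            · have hcb : coeff b (1 : MvPolynomial (Fin n) k) = 0 := by
                rw [coeff_one]
                split_ifs with hifb
                · first
                  | exact absurd hifb hb0
                  | exact absurd hifb.symm hb0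
                · rfl
              have hbu : b ∈ (t.2.1 - 1).support := by
                rw [mem_support_iff, coeff_sub, hcb, sub_zero]
                exact mem_support_iff.mp hb
              have hblt := htfacts.2.2.2.1 b hbu
              have h3 := P.compat b hδ
              rw [zero_add] at h3
              exact P.trans h3 hblt
  -- s'.g ≠ 0
  obtain ⟨y, hgy, hyne, hyexp, hyc, -⟩ := step_y_facts P hs hrel
  have hg'ne : s'.g ≠ 0 := by
    intro h0
    apply hcJ
    have : s'.u * c = s'.w := by
      have := hbasic.2.1
      rw [h0] at this
      linear_combination -this
    exact hsat s'.u c (leadingPart_eq_one_of P hbasic.2.2) (this ▸ hbasic.1)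
  have hdec : lts P (ltexp P s'.g) (ltexp P s.g) := by
    rw [hgy]
    exact ltexp_sub_lts P hs.1 hyne hyexp hyc (by rw [← hgy]; exact hg'ne)
  refine ⟨⟨hg'ne, hbasic.1, hbasic.2.1, hbasic.2.2, ?_⟩, hdec⟩
  intro t ht
  rw [hrel.1] at ht
  rcases List.mem_cons.mp ht with rfl | ht'
  · exact ⟨hs.1, hs.2.1, hs.2.2.1, hs.2.2.2.1, hdec⟩
  · have := hs.2.2.2.2 t ht'
    exact ⟨this.1, this.2.1, this.2.2.1, this.2.2.2.1, lts_trans P hdec this.2.2.2.2⟩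

lemma step_deg {s s' : St n k} (hs : StGood P J c s) (hrel : StepRel P J s s')
    (hle : emin P J s ≤ ecart P s.g) : s'.g.totalDegree ≤ s.g.totalDegree := by
  obtain ⟨y, hgy, -, -, -, hydeg⟩ := step_y_facts P hs hrel
  rw [hgy]
  refine (totalDegree_sub s.g y).trans ?_
  have : y.totalDegree ≤ s.g.totalDegree := by
    refine hydeg.trans ?_
    rw [totalDegree_eq_mdeg_add_ecart P hs.1]
    omega
  omega

noncomputable def run (J : Ideal (MvPolynomial (Fin n) k)) (c : MvPolynomial (Fin n) k) :
    ℕ → St n k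
  | 0 => ⟨c, 1, 0, []⟩
  | (m+1) =>
      if h : ∃ s', StepRel P J (run J c m) s' then Classical.choose h else run J c m

lemma run_zero : run P J c 0 = ⟨c, 1, 0, []⟩ := rfl

lemma run_succ (m : ℕ) : run P J c (m + 1) =
    if h : ∃ s', StepRel P J (run P J c m) s' then Classical.choose h
    else run P J c m := rfl

theorem key_lemma (hJC : J ≤ C)
    (hsat : ∀ u x : MvPolynomial (Fin n) k, leadingPart P u = 1 → u * x ∈ J → x ∈ J)
    (hred : ∀ r ∈ C, r ≠ 0 → (RedSet P J r).Nonempty) : C ≤ J := by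
  intro c hc
  by_contra hcJ
  have hc0 : c ≠ 0 := fun h => hcJ (h ▸ J.zero_mem)
  have hinit : StGood P J c (run P J c 0) := by
    refine ⟨hc0, J.zero_mem, ?_, ?_, ?_⟩
    · show c = 1 * c - 0
      ring
    · show ∀ a ∈ ((1 : MvPolynomial (Fin n) k) - 1).support, P.lt a 0
      intro a ha
      rw [sub_self] at ha
      simp at ha
    · intro t ht
      exact absurd (show t ∈ ([] : List _) from ht) List.not_mem_nil
  have hgood : ∀ m, StGood P J c (run P J c m) ∧
      StepRel P J (run P J c m) (run P J c (m + 1)) := by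
    intro m
    induction m with
    | zero =>
      have hex := step_exists P hJC hc hred _ hinit
      refine ⟨hinit, ?_⟩
      rw [run_succ, dif_pos hex]
      exact Classical.choose_spec hex
    | succ m ih =>
      have hgood' := (step_good P hsat hcJ ih.1 ih.2).1
      have hex := step_exists P hJC hc hred _ hgood'
      refine ⟨hgood', ?_⟩
      rw [run_succ P (m + 1), dif_pos hex]
      exact Classical.choose_spec hex
  set g : ℕ → MvPolynomial (Fin n) k := fun m => (run P J c m).g with hgdef
  have hgne : ∀ m, g m ≠ 0 := fun m => (hgood m).1.1
  have hdec : ∀ m, lts P (ltexp P (g (m + 1))) (ltexp P (g m)) := by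
    intro m
    exact (step_good P hsat hcJ (hgood m).1 (hgood m).2).2
  have hchain : ∀ i j, i < j → lts P (ltexp P (g j)) (ltexp P (g i)) := by
    intro i j hij
    induction j with
    | zero => omega
    | succ j ihj =>
      rcases Nat.lt_succ_iff_lt_or_eq.mp hij with h | rfl
      · exact lts_trans P (hdec j) (ihj h)
      · exact hdec i
  have hhist : ∀ i j, i < j →
      ((run P J c i).g, (run P J c i).u, (run P J c i).w) ∈ (run P J c j).hist := by
    intro i j hij
    induction j with
    | zero => omega
    | succ j ihj =>
      rw [(hgood j).2.1]
      rcases Nat.lt_succ_iff_lt_or_eq.mp hij with h | rfl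
      · exact List.mem_cons_of_mem _ (ihj h)
      · exact List.mem_cons_self
  -- the set of indices with no earlier "dominating" index is finite
  set Bad : Set ℕ := {j | ¬ ∃ i, i < j ∧ ltexp P (g i) ≤ ltexp P (g j) ∧
    ecart P (g i) ≤ ecart P (g j)} with hBaddef
  have hBadFin : Bad.Finite := by
    by_contra hinf
    have hinf' : (setOf (· ∈ Bad)).Infinite := hinf
    have hPWO : (Set.univ : Set ((Fin n →₀ ℕ) × ℕ)).IsPWO := by
      rw [← Set.univ_prod_univ]
      exact (Set.isPWO_of_wellQuasiOrderedLE _).prod ((Set.isWF_univ_iff.mpr ⟨wellFounded_lt⟩).isPWO)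
    obtain ⟨m1, m2, hm12, hle⟩ := hPWO
      (fun m => ⟨(ltexp P (g (Nat.nth (· ∈ Bad) m)), ecart P (g (Nat.nth (· ∈ Bad) m))),
        Set.mem_univ _⟩)
    have hj : Nat.nth (· ∈ Bad) m2 ∈ Bad := Nat.nth_mem_of_infinite hinf' m2
    exact hj ⟨Nat.nth (· ∈ Bad) m1, (Nat.nth_lt_nth hinf').mpr hm12,
      (Prod.mk_le_mk.mp hle).1, (Prod.mk_le_mk.mp hle).2⟩
  obtain ⟨B, hB⟩ := hBadFin.bddAbove
  set K := B + 1 with hK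
  have hKnotbad : ∀ j, K ≤ j → ∃ i, i < j ∧ ltexp P (g i) ≤ ltexp P (g j) ∧
      ecart P (g i) ≤ ecart P (g j) := by
    intro j hj
    by_contra hcon
    have : j ∈ Bad := hcon
    have := hB this
    omega
  have hemin : ∀ j, K ≤ j → emin P J (run P J c j) ≤ ecart P (g j) := by
    intro j hj
    obtain ⟨i, hij, hexple, hecartle⟩ := hKnotbad j hj
    have hmem : ecart P (g i) ∈ EE P J (run P J c j) :=
      Or.inr ⟨((run P J c i).g, (run P J c i).u, (run P J c i).w), hhist i j hij,
        hexple, rfl⟩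
    exact (Nat.sInf_le hmem).trans hecartle
  have hdegmono : ∀ m, (g (K + m)).totalDegree ≤ (g K).totalDegree := by
    intro m
    induction m with
    | zero => exact le_rfl
    | succ m ihm =>
      have hstep := step_deg P (hgood (K + m)).1 (hgood (K + m)).2
        (hemin (K + m) (by omega))
      calc (g (K + (m+1))).totalDegree = (g ((K + m) + 1)).totalDegree := by ring_nf
        _ ≤ (g (K + m)).totalDegree := hstep
        _ ≤ (g K).totalDegree := ihm
  -- the leading exponents from step K on : infinitely many distinct, bounded degree
  set φ : ℕ → (Fin n →₀ ℕ) := fun m => ltexp P (g (K + m)) with hφ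
  have hφinj : Function.Injective φ := by
    intro i j hij
    rcases lt_trichotomy i j with h | h | h
    · exfalso
      have hl : lts P (φ j) (φ i) := hchain (K + i) (K + j) (by omega)
      rw [hij] at hl
      exact lts_irrefl P _ hl
    · exact h
    · exfalso
      have hl : lts P (φ i) (φ j) := hchain (K + j) (K + i) (by omega)
      rw [hij] at hl
      exact lts_irrefl P _ hl
  have hφrange : Set.range φ ⊆ {a : Fin n →₀ ℕ | mdeg a ≤ (g K).totalDegree} := by
    rintro a ⟨m, rfl⟩
    exact (mdeg_le_totalDegree (ltexp_mem P (hgne (K + m)))).trans (hdegmono m)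
  exact (Set.Infinite.mono hφrange (Set.infinite_range_of_injective hφinj))
    (finite_mdeg_le ((g K).totalDegree))

lemma redSet_nonempty_of_leadingPart_mem {J : Ideal (MvPolynomial (Fin n) k)}
    {r : MvPolynomial (Fin n) k} (hr0 : r ≠ 0)
    (hLr : leadingPart P r ∈ Ideal.span (leadingPart P '' (J : Set (MvPolynomial (Fin n) k)))) :
    (RedSet P J r).Nonempty := by
  have hLne : leadingPart P r ≠ 0 := fun h => hr0 ((leadingPart_eq_zero_iff P).mp h)
  obtain ⟨h, hhJ, hmatch⟩ := exists_leadingPart_match P hLr hLne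
  rw [leadingPart_idem] at hmatch
  have hh0 : h ≠ 0 := fun h0 => hLne (by
    rw [← hmatch, h0, (leadingPart_eq_zero_iff P).mpr rfl])
  refine ⟨h, hhJ, hh0, ?_, ?_⟩
  · rw [← ltexp_leadingPart P hh0, hmatch, ltexp_leadingPart P hr0]
  · rw [← ltc_leadingPart P hh0, hmatch, ltc_leadingPart P hr0]

end KeyLemma

/-! ### Part 7 : assembly -/

section Assembly

theorem main (P : MonomialPreorder n) (I : Ideal (Loc k P))
    (hL : (leadingIdeal P (I : Set (Loc k P))).IsPrime) : I.IsPrime := by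
  set ι := algebraMap (MvPolynomial (Fin n) k) (Loc k P) with hι
  set J : Ideal (MvPolynomial (Fin n) k) := Ideal.comap ι I with hJ
  have hspan : leadingIdeal P (I : Set (Loc k P)) =
      Ideal.span (leadingPart P '' (J : Set (MvPolynomial (Fin n) k))) := by
    unfold leadingIdeal leadingIdealWrt
    congr 1
    ext q
    constructor
    · rintro ⟨f, hf, u, p, hu, hp, rfl⟩
      refine ⟨p, ?_, rfl⟩
      show p ∈ J
      rw [hJ, Ideal.mem_comap, hp]
      exact I.mul_mem_left _ hf
    · rintro ⟨p, hp, rfl⟩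
      refine ⟨ι p, hp, 1, p, leadingPart_one P, by rw [map_one, one_mul], rfl⟩
  have hLJ : (Ideal.span (leadingPart P ''
      (J : Set (MvPolynomial (Fin n) k)))).IsPrime := hspan ▸ hL
  have hsat : ∀ u x : MvPolynomial (Fin n) k, leadingPart P u = 1 → u * x ∈ J → x ∈ J := by
    intro u x hu hux
    have huS : u ∈ Sles k P := Submonoid.subset_closure hu
    have hunit : IsUnit (ι u) := IsLocalization.map_units (Loc k P) (⟨u, huS⟩ : Sles k P)
    rw [hJ, Ideal.mem_comap] at hux ⊢
    rw [map_mul] at hux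
    obtain ⟨v, hv⟩ := hunit.exists_left_inv
    have hx : ι x = v * (ι u * ι x) := by rw [← mul_assoc, hv, one_mul]
    rw [hx]
    exact I.mul_mem_left v hux
  have hmemL : ∀ p ∈ J, leadingPart P p ∈
      Ideal.span (leadingPart P '' (J : Set (MvPolynomial (Fin n) k))) :=
    fun p hp => Ideal.subset_span ⟨p, hp, rfl⟩
  have hJne : (1 : MvPolynomial (Fin n) k) ∉ J := by
    intro h1
    have h2 := hmemL 1 h1
    rw [leadingPart_one] at h2
    exact hLJ.ne_top ((Ideal.eq_top_iff_one _).mpr h2)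
  have hfind : ∀ (C : Ideal (MvPolynomial (Fin n) k)), J ≤ C →
      (∃ x ∈ C, x ∉ J) → ∃ r ∈ C, r ≠ 0 ∧ leadingPart P r ∉
        Ideal.span (leadingPart P '' (J : Set (MvPolynomial (Fin n) k))) := by
    rintro C hJC ⟨x, hxC, hxJ⟩
    by_contra hcon2
    push_neg at hcon2
    have hred : ∀ r ∈ C, r ≠ 0 → (RedSet P J r).Nonempty := by
      intro r hr hr0
      exact redSet_nonempty_of_leadingPart_mem P hr0 (hcon2 r hr hr0)
    exact hxJ (key_lemma P hJC hsat hred hxC)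
  have hJprime : J.IsPrime := by
    rw [Ideal.isPrime_iff]
    refine ⟨fun htop => hJne (htop ▸ Submodule.mem_top), ?_⟩
    intro p q hpq
    by_contra hcon
    push_neg at hcon
    obtain ⟨hp, hq⟩ := hcon
    have hp0 : p ≠ 0 := fun h => hp (h ▸ J.zero_mem)
    have hq0 : q ≠ 0 := fun h => hq (h ▸ J.zero_mem)
    have hpC1 : p ∈ J.colon (Ideal.span {q}) := Ideal.mem_colon_span_singleton.mpr hpq
    have hJC1 : J ≤ J.colon (Ideal.span {q}) :=
      fun z hz => Ideal.mem_colon_span_singleton.mpr (J.mul_mem_right q hz)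
    obtain ⟨r, hrC1, hr0, hrL⟩ := hfind (J.colon (Ideal.span {q})) hJC1 ⟨p, hpC1, hp⟩
    have hrq : r * q ∈ J := Ideal.mem_colon_span_singleton.mp hrC1
    have hrJ : r ∉ J := fun h => hrL (hmemL r h)
    have hqC2 : q ∈ J.colon (Ideal.span {r}) :=
      Ideal.mem_colon_span_singleton.mpr (by rwa [mul_comm])
    have hJC2 : J ≤ J.colon (Ideal.span {r}) :=
      fun z hz => Ideal.mem_colon_span_singleton.mpr (J.mul_mem_right r hz)
    obtain ⟨s, hsC2, hs0, hsL⟩ := hfind (J.colon (Ideal.span {r})) hJC2 ⟨q, hqC2, hq⟩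
    have hsr : s * r ∈ J := Ideal.mem_colon_span_singleton.mp hsC2
    have hLsr := hmemL _ hsr
    rw [leadingPart_mul] at hLsr
    rcases hLJ.mem_or_mem hLsr with h | h
    · exact hsL h
    · exact hrL h
  have hmap : Ideal.map ι J = I := IsLocalization.map_comap (Sles k P) (Loc k P) I
  have hdisj : Disjoint ((Sles k P : Submonoid (MvPolynomial (Fin n) k)) :
      Set (MvPolynomial (Fin n) k)) (J : Set (MvPolynomial (Fin n) k)) := by
    rw [Set.disjoint_left]
    intro s hsS hsJ
    have haux : ∀ x ∈ Sles k P, x ∈ J → False := by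
      intro x hx
      induction hx using Submonoid.closure_induction with
      | mem y hy =>
        intro hyJ
        have h2 := hmemL y hyJ
        rw [hy] at h2
        exact hLJ.ne_top ((Ideal.eq_top_iff_one _).mpr h2)
      | one =>
        intro h1J
        exact hJne h1J
      | mul a b ha hb haF hbF =>
        intro habJ
        rcases hJprime.mem_or_mem habJ with h | h
        · exact haF h
        · exact hbF h
    exact haux s hsS hsJ
  have hfin := IsLocalization.isPrime_of_isPrime_disjoint (Sles k P) (Loc k P) J hJprime hdisj
  rwa [hmap] at hfin

end Assembly

end Mora

/-- If the leading ideal L_<(I) of an ideal I of k[X]_< is prime,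
then I is prime. -/
theorem isPrime_of_leadingIdeal_isPrime (n : ℕ) (k : Type*) [Field k] (P : MonomialPreorder n)
    (I : Ideal (Loc k P))
    (hL : (leadingIdeal P (I : Set (Loc k P))).IsPrime) :
    I.IsPrime :=
  Mora.main P I hL
end

section
/- Let R = k[t^{c_1},...,t^{c_n}] ⊆ k[t_1,...,t_m] be a toric ring with toric ideal ℑ = ker(φ : k[X] → R, x_i ↦ t^{c_i}), and let < be the monomial preorder on k[X] associated to the m × n matrix M with columns c_1,...,c_n (x^a < x^b iff M·a <_lex M·b). Then for every ideal I of k[X] containing ℑ: L_<(ℑ) = ℑ, L_<(I) ⊇ ℑ, and φ(L_<(I)) is a monomial ideal of R (i.e., generated by monomials of k[t_1,...,t_m]). -/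
open MvPolynomial

variable {n : ℕ} {k : Type*} [Field k]

/- ## Auxiliary machinery -/

section Aux

variable {m : ℕ}

/-- The weight (matrix-vector product `M·a`) of an exponent vector, as a `Finsupp`. -/
noncomputable def wgt (c : Fin n → (Fin m →₀ ℕ)) (a : Fin n →₀ ℕ) : Fin m →₀ ℕ :=
  ∑ i, a i • c i

lemma wgt_apply (c : Fin n → (Fin m →₀ ℕ)) (a : Fin n →₀ ℕ) (j : Fin m) :
    wgt c a j = ∑ i, c i j * a i := by
  simp [wgt, Finsupp.finset_sum_apply, mul_comm]

/-- The weight viewed in the lexicographic order on `Fin m → ℕ`. -/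
noncomputable def keyF (c : Fin n → (Fin m →₀ ℕ)) (a : Fin n →₀ ℕ) : Lex (Fin m →₀ ℕ) :=
  toLex (wgt c a)

lemma keyF_lt_iff (c : Fin n → (Fin m →₀ ℕ)) (a b : Fin n →₀ ℕ) :
    (keyF c a < keyF c b) ↔
      Pi.Lex (· < ·) (fun x y => x < y)
        (fun j => ∑ i, c i j * a i) (fun j => ∑ i, c i j * b i) := by
  have h1 : (fun j => ∑ i, c i j * a i) = ⇑(wgt c a) := funext fun j => (wgt_apply c a j).symm
  have h2 : (fun j => ∑ i, c i j * b i) = ⇑(wgt c b) := funext fun j => (wgt_apply c b j).symm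
  rw [h1, h2]
  exact Iff.rfl

lemma keyF_eq_iff (c : Fin n → (Fin m →₀ ℕ)) (a b : Fin n →₀ ℕ) :
    keyF c a = keyF c b ↔ wgt c a = wgt c b :=
  ⟨fun h => toLex.injective h, fun h => congrArg toLex h⟩

lemma phi_monomial (c : Fin n → (Fin m →₀ ℕ)) (a : Fin n →₀ ℕ) (r : k) :
    aeval (fun i => monomial (c i) (1 : k)) (monomial a r) = monomial (wgt c a) r := by
  rw [aeval_monomial]
  have h1 : ∀ i e, (monomial (c i) (1:k)) ^ e = monomial (e • c i) 1 := by
    intro i e; rw [monomial_pow, one_pow]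
  have h2 : (wgt c a) = a.sum (fun i e => e • c i) := by
    rw [Finsupp.sum_fintype]
    · rfl
    · intro i; simp
  rw [h2, monomial_finsupp_sum_index]
  rw [Finsupp.prod_fintype _ _ (fun i => by simp), Finsupp.prod_fintype _ _ (fun i => by simp)]
  congr 1
  exact Finset.prod_congr rfl fun i _ => h1 i (a i)

lemma phi_apply (c : Fin n → (Fin m →₀ ℕ)) (f : MvPolynomial (Fin n) k) :
    aeval (fun i => monomial (c i) (1 : k)) f
      = ∑ a ∈ f.support, monomial (wgt c a) (coeff a f) := by
  conv_lhs => rw [f.as_sum, map_sum]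
  exact Finset.sum_congr rfl fun a _ => phi_monomial c a (coeff a f)

lemma coeff_phi (c : Fin n → (Fin m →₀ ℕ)) (f : MvPolynomial (Fin n) k) (d : Fin m →₀ ℕ) :
    coeff d (aeval (fun i => monomial (c i) (1 : k)) f)
      = ∑ a ∈ f.support.filter (fun a => wgt c a = d), coeff a f := by
  rw [phi_apply, coeff_sum, Finset.sum_filter]
  exact Finset.sum_congr rfl fun a _ => by rw [coeff_monomial]

lemma leadingPart_zero (P : MonomialPreorder n) :
    leadingPart P (0 : MvPolynomial (Fin n) k) = 0 := by
  simp [leadingPart]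

open Classical in
lemma coeff_leadingPart (P : MonomialPreorder n) (f : MvPolynomial (Fin n) k)
    (b : Fin n →₀ ℕ) :
    coeff b (leadingPart P f)
      = if b ∈ f.support.filter (fun a => ∀ b' ∈ f.support, ¬ P.lt a b')
        then coeff b f else 0 := by
  classical
  rw [leadingPart, coeff_sum]
  rw [Finset.sum_congr rfl (fun a _ => coeff_monomial b a (coeff a f))]
  exact Finset.sum_ite_eq' _ b (fun a => coeff a f)

section WithKey

variable (c : Fin n → (Fin m →₀ ℕ)) (P : MonomialPreorder n)

open Classical in
/-- The leading support is exactly the set of exponents of maximal weight. -/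
lemma filter_lead_eq (hlt : ∀ a b : Fin n →₀ ℕ, P.lt a b ↔ keyF c a < keyF c b)
    (f : MvPolynomial (Fin n) k) (hf : f ≠ 0)
    (a₀ : Fin n →₀ ℕ) (ha₀ : a₀ ∈ f.support)
    (hmax : ∀ b ∈ f.support, keyF c b ≤ keyF c a₀) :
    f.support.filter (fun a => ∀ b ∈ f.support, ¬ P.lt a b)
      = f.support.filter (fun a => wgt c a = wgt c a₀) := by
  apply Finset.filter_congr
  intro a ha
  constructor
  · intro h
    rw [← keyF_eq_iff]
    have h1 : keyF c a ≤ keyF c a₀ := hmax a ha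
    have h2 : ¬ (keyF c a < keyF c a₀) := by rw [← hlt]; exact h a₀ ha₀
    exact le_antisymm h1 (not_lt.mp h2)
  · intro h b hb
    rw [hlt]
    rw [← keyF_eq_iff] at h
    rw [h]
    exact not_lt.mpr (hmax b hb)

open Classical in
lemma phi_leadingPart (hlt : ∀ a b : Fin n →₀ ℕ, P.lt a b ↔ keyF c a < keyF c b)
    (f : MvPolynomial (Fin n) k) (hf : f ≠ 0) :
    ∃ d : Fin m →₀ ℕ,
      aeval (fun i => monomial (c i) (1 : k)) (leadingPart P f)
        = monomial d (coeff d (aeval (fun i => monomial (c i) (1 : k)) f)) := by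
  classical
  have hne : f.support.Nonempty := support_nonempty.mpr hf
  obtain ⟨a₀, ha₀, hsup⟩ := Finset.exists_mem_eq_sup' hne (keyF c)
  have hmax : ∀ b ∈ f.support, keyF c b ≤ keyF c a₀ := by
    intro b hb; rw [← hsup]; exact Finset.le_sup' (keyF c) hb
  refine ⟨wgt c a₀, ?_⟩
  have h1 : leadingPart P f = ∑ a ∈ f.support.filter (fun a => wgt c a = wgt c a₀),
      monomial a (coeff a f) := by
    rw [leadingPart, filter_lead_eq c P hlt f hf a₀ ha₀ hmax]
  rw [coeff_phi, h1, map_sum]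
  have h2 : ∀ a ∈ f.support.filter (fun a => wgt c a = wgt c a₀),
      aeval (fun i => monomial (c i) (1 : k)) (monomial a (coeff a f))
        = monomial (wgt c a₀) (coeff a f) := by
    intro a ha
    rw [phi_monomial, (Finset.mem_filter.mp ha).2]
  rw [Finset.sum_congr rfl h2]
  exact (map_sum (monomial (wgt c a₀)) (fun a => coeff a f) _).symm

lemma lead_mem_ker (hlt : ∀ a b : Fin n →₀ ℕ, P.lt a b ↔ keyF c a < keyF c b)
    (f : MvPolynomial (Fin n) k)
    (hf : aeval (fun i => monomial (c i) (1 : k)) f = 0) :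
    aeval (fun i => monomial (c i) (1 : k)) (leadingPart P f) = 0 := by
  by_cases h0 : f = 0
  · rw [h0, leadingPart_zero, map_zero]
  · obtain ⟨d, hd⟩ := phi_leadingPart c P hlt f h0
    rw [hd, hf, coeff_zero, monomial_zero]

open Classical in
lemma support_sub_lead_card (hlt : ∀ a b : Fin n →₀ ℕ, P.lt a b ↔ keyF c a < keyF c b)
    (f : MvPolynomial (Fin n) k) (hf : f ≠ 0) :
    (f - leadingPart P f).support.card < f.support.card := by
  classical
  set F := f.support.filter (fun a => ∀ b ∈ f.support, ¬ P.lt a b) with hF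
  have hne : f.support.Nonempty := support_nonempty.mpr hf
  obtain ⟨a₀, ha₀, hsup⟩ := Finset.exists_mem_eq_sup' hne (keyF c)
  have hmax : ∀ b ∈ f.support, keyF c b ≤ keyF c a₀ := by
    intro b hb; rw [← hsup]; exact Finset.le_sup' (keyF c) hb
  have hFne : a₀ ∈ F := by
    rw [hF, Finset.mem_filter]
    refine ⟨ha₀, fun b hb => ?_⟩
    rw [hlt]
    exact not_lt.mpr (hmax b hb)
  have hFsub : F ⊆ f.support := Finset.filter_subset _ _
  have hsubset : (f - leadingPart P f).support ⊆ f.support \ F := by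
    intro b hb
    rw [mem_support_iff] at hb
    rw [coeff_sub] at hb
    have hcl := coeff_leadingPart (k := k) P f b
    rw [← hF] at hcl
    by_cases hbF : b ∈ F
    · exfalso; apply hb; rw [hcl, if_pos hbF, sub_self]
    · rw [Finset.mem_sdiff]
      refine ⟨?_, hbF⟩
      rw [hcl, if_neg hbF, sub_zero] at hb
      exact mem_support_iff.mpr hb
  calc (f - leadingPart P f).support.card
      ≤ (f.support \ F).card := Finset.card_le_card hsubset
    _ < f.support.card := by
        rw [Finset.card_sdiff_of_subset hFsub]
        have h1 : 0 < F.card := Finset.card_pos.mpr ⟨a₀, hFne⟩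
        have h2 : F.card ≤ f.support.card := Finset.card_le_card hFsub
        omega

lemma span_leadingPart_eq (hlt : ∀ a b : Fin n →₀ ℕ, P.lt a b ↔ keyF c a < keyF c b)
    (J : Ideal (MvPolynomial (Fin n) k))
    (hL : ∀ g ∈ J, leadingPart P g ∈ J) :
    leadingIdealPoly P (J : Set (MvPolynomial (Fin n) k)) = J := by
  rw [leadingIdealPoly]
  apply le_antisymm
  · rw [Ideal.span_le]
    rintro _ ⟨g, hg, rfl⟩
    exact hL g hg
  · intro f hf
    have H : ∀ N : ℕ, ∀ f : MvPolynomial (Fin n) k, f.support.card ≤ N → f ∈ J →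
        f ∈ Ideal.span (leadingPart P '' (J : Set (MvPolynomial (Fin n) k))) := by
      intro N
      induction N with
      | zero =>
        intro f hcard _
        have : f.support = ∅ := Finset.card_eq_zero.mp (Nat.le_zero.mp hcard)
        have : f = 0 := support_eq_empty.mp this
        rw [this]; exact Ideal.zero_mem _
      | succ N ih =>
        intro f hcard hfJ
        by_cases hf0 : f = 0
        · rw [hf0]; exact Ideal.zero_mem _
        have h1 : leadingPart P f ∈
            Ideal.span (leadingPart P '' (J : Set (MvPolynomial (Fin n) k))) :=
          Ideal.subset_span ⟨f, hfJ, rfl⟩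
        have h2 : f - leadingPart P f ∈ J := J.sub_mem hfJ (hL f hfJ)
        have h3 : (f - leadingPart P f).support.card ≤ N := by
          have := support_sub_lead_card c P hlt f hf0
          omega
        have h4 := ih (f - leadingPart P f) h3 h2
        have : f = leadingPart P f + (f - leadingPart P f) := by ring
        rw [this]
        exact Ideal.add_mem _ h1 h4
    exact H f.support.card f le_rfl hf

end WithKey

end Aux

/-- Let φ : k[X] → k[t_1,...,t_m] send x_i to t^{c_i}, with toric ideal
ℑ = ker φ, and let < be the toric preorder associated to the matrix M with columns c_i
(x^a < x^b iff M·a <_lex M·b). Then for every ideal I ⊇ ℑ: L_<(ℑ) = ℑ, L_<(I) ⊇ ℑ,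
and φ(L_<(I)) is a monomial ideal of the toric ring R = im φ. -/
theorem toric_preorder_leadingIdeal (n m : ℕ) (k : Type*) [Field k]
    (c : Fin n → (Fin m →₀ ℕ)) (P : MonomialPreorder n)
    (hP : ∀ a b : Fin n →₀ ℕ, P.lt a b ↔
      Pi.Lex (· < ·) (fun x y => x < y)
        (fun j => ∑ i, c i j * a i) (fun j => ∑ i, c i j * b i))
    (φ : MvPolynomial (Fin n) k →ₐ[k] MvPolynomial (Fin m) k)
    (hφ : φ = aeval (fun i => monomial (c i) (1 : k)))
    (ℑ : Ideal (MvPolynomial (Fin n) k)) (hℑ : ℑ = RingHom.ker φ.toRingHom)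
    (I : Ideal (MvPolynomial (Fin n) k)) (hI : ℑ ≤ I) :
    leadingIdealPoly P (ℑ : Set (MvPolynomial (Fin n) k)) = ℑ ∧
    ℑ ≤ leadingIdealPoly P (I : Set (MvPolynomial (Fin n) k)) ∧
    ∃ T : Set φ.range,
      (∀ g ∈ T, ∃ d : Fin m →₀ ℕ, (g : MvPolynomial (Fin m) k) = monomial d 1) ∧
      Ideal.map φ.rangeRestrict (leadingIdealPoly P (I : Set (MvPolynomial (Fin n) k))) =
        Ideal.span T := by
  classical
  have hlt : ∀ a b : Fin n →₀ ℕ, P.lt a b ↔ keyF c a < keyF c b := by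
    intro a b; rw [hP, ← keyF_lt_iff]
  have hφ' : ∀ f, φ f = aeval (fun i => monomial (c i) (1 : k)) f := fun f => by rw [hφ]
  have hker : ∀ f, f ∈ ℑ ↔ φ f = 0 := by
    intro f; rw [hℑ]; exact Iff.rfl
  -- leading parts of elements of ℑ stay in ℑ
  have hLker : ∀ g ∈ ℑ, leadingPart P g ∈ ℑ := by
    intro g hg
    rw [hker] at hg ⊢
    rw [hφ'] at hg ⊢
    exact lead_mem_ker c P hlt g hg
  have part1 : leadingIdealPoly P (ℑ : Set (MvPolynomial (Fin n) k)) = ℑ :=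
    span_leadingPart_eq c P hlt ℑ hLker
  refine ⟨part1, ?_, ?_⟩
  · -- ℑ ≤ L(I)
    rw [← part1, leadingIdealPoly, leadingIdealPoly]
    exact Ideal.span_mono (Set.image_mono hI)
  · -- φ(L(I)) is a monomial ideal
    refine ⟨{g : φ.range | (∃ d : Fin m →₀ ℕ,
        (g : MvPolynomial (Fin m) k) = monomial d 1) ∧
        g ∈ Ideal.map φ.rangeRestrict (leadingIdealPoly P (I : Set (MvPolynomial (Fin n) k)))},
        ?_, ?_⟩
    · intro g hg; exact hg.1
    apply le_antisymm
    · -- map ≤ span T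
      refine Ideal.map_le_iff_le_comap.mpr (Ideal.span_le.mpr ?_)
      rintro _ ⟨f, hfI, rfl⟩
      rw [SetLike.mem_coe, Ideal.mem_comap]
      by_cases hf0 : f = 0
      · rw [hf0, leadingPart_zero, map_zero]
        exact Ideal.zero_mem _
      obtain ⟨d, hd⟩ := phi_leadingPart c P hlt f hf0
      rw [← hφ'] at hd
      set s : k := coeff d (aeval (fun i => monomial (c i) (1 : k)) f) with hs
      have hφL : φ (leadingPart P f) = monomial d s := hd
      have hmemJ : φ.rangeRestrict (leadingPart P f) ∈
          Ideal.map φ.rangeRestrict (leadingIdealPoly P (I : Set (MvPolynomial (Fin n) k))) :=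
        Ideal.mem_map_of_mem _ (Ideal.subset_span ⟨f, hfI, rfl⟩)
      by_cases hs0 : s = 0
      · have : φ.rangeRestrict (leadingPart P f) = 0 := by
          apply Subtype.ext
          show φ (leadingPart P f) = 0
          rw [hφL, hs0, monomial_zero]
        rw [this]; exact Ideal.zero_mem _
      · have hmono_range : monomial d (1 : k) ∈ φ.range := by
          have h1 : φ (leadingPart P f) ∈ φ.range := ⟨leadingPart P f, rfl⟩
          have h2 : (s⁻¹ : k) • φ (leadingPart P f) ∈ φ.range :=
            φ.range.smul_mem h1 s⁻¹
          have h3 : (s⁻¹ : k) • φ (leadingPart P f) = monomial d 1 := by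
            rw [hφL, smul_monomial, smul_eq_mul, inv_mul_cancel₀ hs0]
          rwa [h3] at h2
        set g : φ.range := ⟨monomial d 1, hmono_range⟩ with hg
        have hgJ : g ∈ Ideal.map φ.rangeRestrict
            (leadingIdealPoly P (I : Set (MvPolynomial (Fin n) k))) := by
          have heq : g = algebraMap k φ.range s⁻¹ * φ.rangeRestrict (leadingPart P f) := by
            apply Subtype.ext
            push_cast
            rw [← Algebra.smul_def]
            show (monomial d 1 : MvPolynomial (Fin m) k) = s⁻¹ • φ (leadingPart P f)
            rw [hφL, smul_monomial, smul_eq_mul, inv_mul_cancel₀ hs0]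
          rw [heq]
          exact Ideal.mul_mem_left _ _ hmemJ
        have hgT : g ∈ {g : φ.range | (∃ d : Fin m →₀ ℕ,
            (g : MvPolynomial (Fin m) k) = monomial d 1) ∧
            g ∈ Ideal.map φ.rangeRestrict
              (leadingIdealPoly P (I : Set (MvPolynomial (Fin n) k)))} := ⟨⟨d, rfl⟩, hgJ⟩
        have hfinal : φ.rangeRestrict (leadingPart P f) = algebraMap k φ.range s * g := by
          apply Subtype.ext
          push_cast
          rw [← Algebra.smul_def]
          show φ (leadingPart P f) = s • (monomial d 1 : MvPolynomial (Fin m) k)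
          rw [hφL, smul_monomial, smul_eq_mul, mul_one]
        rw [hfinal]
        exact Ideal.mul_mem_left _ _ (Ideal.subset_span hgT)
    · -- span T ≤ map
      rw [Ideal.span_le]
      intro g hg
      exact hg.2
end
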